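/- arXiv:2511.17232 — 3 statements merged into one kernel-verified Lean document; each statement's English description precedes it below -/
import Mathlib

section
/- The rational cubic/linear interpolation kernel S_{3/1} with parameter a > -1 satisfies the partition of unity property: for every real t, the sum over all integers i of S_{3/1}(t - i) equals 1. -/
noncomputable def S31 (a t : ℝ) : ℝ :=
  if |t| < 1 then (1 - |t|) * (1 + (1 + a) * |t| - t ^ 2) / (1 + a * |t|)
  else if |t| < 2 then (1 - |t|) * (2 - |t|) ^ 2 / (1 - a + a * |t|)
  else 0

lemma S31_denom_pos (a x : ℝ) (ha : -1 < a) (hx0 : 0 ≤ x) (hx1 : x ≤ 1) :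
    0 < 1 + a * x := by
  rcases le_or_gt a 0 with h | h
  · nlinarith
  · nlinarith

lemma S31_zero_of_two_le (a x : ℝ) (h : 2 ≤ |x|) : S31 a x = 0 := by
  unfold S31
  rw [if_neg (by linarith), if_neg (by linarith)]

theorem S31_partition_of_unity (a : ℝ) (ha : -1 < a) (t : ℝ) :
    ∑' i : ℤ, S31 a (t - i) = 1 := by
  set n : ℤ := ⌊t⌋ with hn
  have hs0 : (0:ℝ) ≤ t - n := by
    have := Int.floor_le t; linarith
  have hs1 : t - n < 1 := by
    have := Int.lt_floor_add_one t; linarith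
  have hvanish : ∀ i : ℤ, i ∉ ({n-1, n, n+1, n+2} : Finset ℤ) → S31 a (t - i) = 0 := by
    intro i hi
    simp only [Finset.mem_insert, Finset.mem_singleton] at hi
    push_neg at hi
    apply S31_zero_of_two_le
    rcases lt_or_ge (i : ℝ) (n : ℝ) with h | h
    · have hle : i ≤ n - 2 := by
        have : i < n := by exact_mod_cast h
        omega
      have : (i : ℝ) ≤ (n : ℝ) - 2 := by exact_mod_cast hle
      rw [abs_of_nonneg (by linarith)]; linarith
    · have hge : n + 3 ≤ i := by
        have : n ≤ i := by exact_mod_cast h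
        omega
      have : (n : ℝ) + 3 ≤ (i : ℝ) := by exact_mod_cast hge
      rw [abs_of_nonpos (by linarith)]; linarith
  rw [tsum_eq_sum hvanish]
  have hsum : ∑ i ∈ ({n-1, n, n+1, n+2} : Finset ℤ), S31 a (t - i) =
      S31 a (t - ((n:ℝ) - 1)) + S31 a (t - n) + S31 a (t - ((n:ℝ) + 1))
        + S31 a (t - ((n:ℝ) + 2)) := by
    rw [Finset.sum_insert (by simp <;> omega), Finset.sum_insert (by simp <;> omega),
      Finset.sum_insert (by simp <;> omega), Finset.sum_singleton]
    push_cast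
    ring
  rw [hsum]
  set s : ℝ := t - n with hsdef
  have e1 : t - ((n:ℝ) - 1) = s + 1 := by rw [hsdef]; ring
  have e2 : t - ((n:ℝ) + 1) = s - 1 := by rw [hsdef]; ring
  have e3 : t - ((n:ℝ) + 2) = s - 2 := by rw [hsdef]; ring
  rw [e1, e2, e3]
  have hd1 : (0:ℝ) < 1 + a * s := S31_denom_pos a s ha hs0 (by linarith)
  have hd2 : (0:ℝ) < 1 + a * (1 - s) := S31_denom_pos a (1 - s) ha (by linarith) (by linarith)
  rcases eq_or_lt_of_le hs0 with h0 | h0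
  · -- s = 0
    have hs : s = 0 := h0.symm
    rw [hs]
    norm_num [S31, abs_of_nonneg, abs_of_nonpos]
  · -- 0 < s
    have v1 : S31 a (s + 1) = (1 - (s+1)) * (2 - (s+1)) ^ 2 / (1 - a + a * (s+1)) := by
      unfold S31
      rw [abs_of_nonneg (by linarith), if_neg (by linarith), if_pos (by linarith)]
    have v2 : S31 a s = (1 - s) * (1 + (1 + a) * s - s ^ 2) / (1 + a * s) := by
      unfold S31
      rw [abs_of_nonneg hs0, if_pos (by linarith)]
    have v3 : S31 a (s - 1) = (1 - (1-s)) * (1 + (1 + a) * (1-s) - (s-1) ^ 2) / (1 + a * (1-s)) := by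
      unfold S31
      rw [abs_of_nonpos (by linarith)]
      rw [show -(s-1) = 1 - s by ring, if_pos (by linarith)]
    have v4 : S31 a (s - 2) = (1 - (2-s)) * (2 - (2-s)) ^ 2 / (1 - a + a * (2-s)) := by
      unfold S31
      rw [abs_of_nonpos (by linarith)]
      rw [show -(s-2) = 2 - s by ring, if_neg (by linarith), if_pos (by linarith)]
    rw [v1, v2, v3, v4]
    have hne1 : (1 - a + a * (s+1)) ≠ 0 := by
      have : 1 - a + a * (s+1) = 1 + a * s := by ring
      rw [this]; linarith
    have hne2 : (1 + a * s) ≠ 0 := ne_of_gt hd1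
    have hne3 : (1 + a * (1-s)) ≠ 0 := ne_of_gt hd2
    have hne4 : (1 - a + a * (2-s)) ≠ 0 := by
      have : 1 - a + a * (2-s) = 1 + a * (1 - s) := by ring
      rw [this]; linarith
    rw [show 1 - a + a * (s+1) = 1 + a * s by ring, show 1 - a + a * (2-s) = 1 + a * (1 - s) by ring]
    rw [div_add_div _ _ hne2 hne2, div_add_div _ _ (mul_ne_zero hne2 hne2) hne3,
      div_add_div _ _ (mul_ne_zero (mul_ne_zero hne2 hne2) hne3) hne3,
      div_eq_one_iff_eq (mul_ne_zero (mul_ne_zero (mul_ne_zero hne2 hne2) hne3) hne3)]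
    ring
end

section
/- The rational cubic/linear interpolation kernel S_{3/1} with parameter a > -1 is continuously differentiable on ℝ; in particular its left and right derivatives agree at t = 0, t = 1, and t = 2, and its derivative at t = 1 equals -1 for every admissible a. -/
open Set Filter Topology

/-!
On `[0, 2]` the kernel is given by the two rational pieces
`(1 - t) (1 + (1 + a) t - t²) / (1 + a t)` on `[0, 1]` and `(1 - t) (2 - t)² / (1 - a + a t)` on
`[1, 2]`, whose denominators stay positive because `a > -1`, and it vanishes on `[2, ∞)`.
Two `C¹` functions glued at a point where their derivatives agree give a function that is `C¹`
there. Both pieces have slope `-1` at `1`, the second one has slope `0` at `2`, and the first one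
has slope `0` at `0`, so it glues with its own reflection. Evenness of the kernel covers `t < 0`.
-/

theorem Filter.EventuallyEq.eventuallyEq_nhds_of_isOpen {X Y : Type*} [TopologicalSpace X]
    {s : Set X} {x : X} {f g : X → Y} (h : f =ᶠ[𝓝[s] x] g) (hs : IsOpen s) :
    ∀ᶠ y in 𝓝[s] x, f =ᶠ[𝓝 y] g :=
  (eventually_eventually_nhdsWithin.2 h).mp <|
    eventually_mem_nhdsWithin.mono fun y hy hfg => by rwa [hs.nhdsWithin_eq hy] at hfg

theorem contDiffAt_one_of_eventually_nhdsNE {𝕜 F : Type*} [NontriviallyNormedField 𝕜]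
    [NormedAddCommGroup F] [NormedSpace 𝕜 F] {f : 𝕜 → F} {x : 𝕜}
    (h : ∀ᶠ y in 𝓝[≠] x, ContDiffAt 𝕜 1 f y) (hd : DifferentiableAt 𝕜 f x)
    (hc : ContinuousAt (deriv f) x) : ContDiffAt 𝕜 1 f x := by
  have hnhds : ∀ᶠ y in 𝓝 x, DifferentiableAt 𝕜 f y ∧ ContinuousAt (deriv f) y := by
    rw [← nhdsNE_sup_pure, eventually_sup, eventually_pure]
    refine ⟨h.mono fun y hy => ⟨hy.differentiableAt one_ne_zero, ?_⟩, hd, hc⟩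
    exact (hy.derivWithin (m := 0) le_rfl).continuousAt
  obtain ⟨u, hu, huo, hxu⟩ := eventually_nhds_iff.1 hnhds
  have hf : ContDiffOn 𝕜 1 f u := (contDiffOn_succ_iff_deriv_of_isOpen (n := 0) huo).2
    ⟨fun y hy => (hu y hy).1.differentiableWithinAt, by simp,
      contDiffOn_zero.2 fun y hy => (hu y hy).2.continuousWithinAt⟩
  exact hf.contDiffAt (huo.mem_nhds hxu)

theorem one_add_mul_pos_of_mem_Icc {a s : ℝ} (ha : -1 < a) (h0 : 0 ≤ s) (h1 : s ≤ 1) :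
    0 < 1 + a * s := by
  nlinarith [mul_nonneg h0 (by linarith : (0 : ℝ) ≤ 1 + a),
    mul_nonneg (sub_nonneg.2 h1) (by linarith : (0 : ℝ) ≤ 1 + a)]

section Gluing

variable {E : Type*} [NormedAddCommGroup E] [NormedSpace ℝ E] {f g h : ℝ → E} {c : ℝ}

theorem hasDerivAt_of_nhdsLE_nhdsGE {e : E} (hg : HasDerivAt g e c) (hh : HasDerivAt h e c)
    (hfg : f =ᶠ[𝓝[≤] c] g) (hfh : f =ᶠ[𝓝[≥] c] h) : HasDerivAt f e c := by
  have hl := hg.hasDerivWithinAt.congr_of_eventuallyEq hfg (hfg.eq_of_nhdsWithin self_mem_Iic)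
  have hr := hh.hasDerivWithinAt.congr_of_eventuallyEq hfh (hfh.eq_of_nhdsWithin self_mem_Ici)
  simpa [Iic_union_Ici] using hl.union hr

theorem contDiffAt_one_of_nhdsLE_nhdsGE (hg : ContDiffAt ℝ 1 g c) (hh : ContDiffAt ℝ 1 h c)
    (hfg : f =ᶠ[𝓝[≤] c] g) (hfh : f =ᶠ[𝓝[≥] c] h) (hd : deriv g c = deriv h c) :
    ContDiffAt ℝ 1 f c := by
  have hfc : HasDerivAt f (deriv g c) c :=
    hasDerivAt_of_nhdsLE_nhdsGE (hg.differentiableAt one_ne_zero).hasDerivAt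
      (hd ▸ (hh.differentiableAt one_ne_zero).hasDerivAt) hfg hfh
  have hl : ∀ᶠ y in 𝓝[<] c, f =ᶠ[𝓝 y] g :=
    (hfg.filter_mono (nhdsWithin_mono _ Iio_subset_Iic_self)).eventuallyEq_nhds_of_isOpen
      isOpen_Iio
  have hr : ∀ᶠ y in 𝓝[>] c, f =ᶠ[𝓝 y] h :=
    (hfh.filter_mono (nhdsWithin_mono _ Ioi_subset_Ici_self)).eventuallyEq_nhds_of_isOpen
      isOpen_Ioi
  refine contDiffAt_one_of_eventually_nhdsNE ?_ hfc.differentiableAt ?_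
  · rw [← nhdsLT_sup_nhdsGT, eventually_sup]
    exact ⟨(hl.and ((hg.eventually (by simp)).filter_mono nhdsWithin_le_nhds)).mono
        fun y hy => hy.2.congr_of_eventuallyEq hy.1,
      (hr.and ((hh.eventually (by simp)).filter_mono nhdsWithin_le_nhds)).mono
        fun y hy => hy.2.congr_of_eventuallyEq hy.1⟩
  · rw [continuousAt_iff_continuous_left_right, ← continuousWithinAt_Iio_iff_Iic,
      ← continuousWithinAt_Ioi_iff_Ici]
    exact ⟨(hg.derivWithin (m := 0) le_rfl).continuousAt.continuousWithinAt.congr_of_eventuallyEq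
        (hl.mono fun y hy => hy.deriv_eq) hfc.deriv,
      (hh.derivWithin (m := 0) le_rfl).continuousAt.continuousWithinAt.congr_of_eventuallyEq
        (hr.mono fun y hy => hy.deriv_eq) (hfc.deriv.trans hd)⟩

end Gluing

namespace S31

noncomputable def piece₁ (a t : ℝ) : ℝ := (1 - t) * (1 + (1 + a) * t - t ^ 2) / (1 + a * t)

noncomputable def piece₂ (a t : ℝ) : ℝ := (1 - t) * (2 - t) ^ 2 / (1 - a + a * t)

variable {a : ℝ}

theorem apply_neg (a t : ℝ) : S31 a (-t) = S31 a t := by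
  simp [S31]

theorem eqOn_piece₁ (a : ℝ) : EqOn (S31 a) (piece₁ a) (Icc 0 1) := by
  rintro t ⟨h0, h1⟩
  rcases h1.lt_or_eq with h1 | rfl
  · simp [S31, piece₁, abs_of_nonneg h0, h1]
  · norm_num [S31, piece₁]

theorem eqOn_piece₂ (a : ℝ) : EqOn (S31 a) (piece₂ a) (Icc 1 2) := by
  rintro t ⟨h1, h2⟩
  have ht : |t| = t := abs_of_nonneg (by linarith)
  rcases h2.lt_or_eq with h2 | rfl
  · simp [S31, piece₂, ht, h2, h1.not_gt]
  · norm_num [S31, piece₂]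

theorem eqOn_zero (a : ℝ) : EqOn (S31 a) 0 (Ici 2) := by
  intro t (h2 : 2 ≤ t)
  simp [S31, abs_of_nonneg (by linarith : (0 : ℝ) ≤ t), h2.not_gt, (by linarith : ¬ t < 1)]

theorem contDiffAt_piece₁ {n : WithTop ℕ∞} {t : ℝ} (h : 1 + a * t ≠ 0) :
    ContDiffAt ℝ n (piece₁ a) t :=
  ContDiffAt.div (by fun_prop) (by fun_prop) h

theorem contDiffAt_piece₂ {n : WithTop ℕ∞} {t : ℝ} (h : 1 - a + a * t ≠ 0) :
    ContDiffAt ℝ n (piece₂ a) t :=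
  ContDiffAt.div (by fun_prop) (by fun_prop) h

theorem hasDerivAt_piece₁ {t : ℝ} (h : 1 + a * t ≠ 0) :
    HasDerivAt (piece₁ a) (((-(1 + (1 + a) * t - t ^ 2) + (1 - t) * (1 + a - 2 * t)) * (1 + a * t)
      - (1 - t) * (1 + (1 + a) * t - t ^ 2) * a) / (1 + a * t) ^ 2) t :=
  ((((hasDerivAt_id' t).const_sub 1).fun_mul
    ((((hasDerivAt_id' t).const_mul (1 + a)).const_add 1).fun_sub
      ((hasDerivAt_id' t).fun_pow 2))).fun_div
    (((hasDerivAt_id' t).const_mul a).const_add 1) h).congr_deriv (by ring)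

theorem hasDerivAt_piece₂ {t : ℝ} (h : 1 - a + a * t ≠ 0) :
    HasDerivAt (piece₂ a) (((-(2 - t) ^ 2 - 2 * (1 - t) * (2 - t)) * (1 - a + a * t)
      - (1 - t) * (2 - t) ^ 2 * a) / (1 - a + a * t) ^ 2) t :=
  ((((hasDerivAt_id' t).const_sub 1).fun_mul (((hasDerivAt_id' t).const_sub 2).fun_pow 2)).fun_div
    (((hasDerivAt_id' t).const_mul a).const_add (1 - a)) h).congr_deriv (by ring)

theorem hasDerivAt_piece₁_zero : HasDerivAt (piece₁ a) 0 0 :=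
  (hasDerivAt_piece₁ (by simp)).congr_deriv (by ring)

theorem hasDerivAt_piece₁_one (ha : 1 + a ≠ 0) : HasDerivAt (piece₁ a) (-1) 1 :=
  (hasDerivAt_piece₁ (by simpa using ha)).congr_deriv (by field_simp; ring)

theorem hasDerivAt_piece₂_one : HasDerivAt (piece₂ a) (-1) 1 :=
  (hasDerivAt_piece₂ (by simp)).congr_deriv (by ring)

theorem hasDerivAt_piece₂_two (ha : 1 + a ≠ 0) : HasDerivAt (piece₂ a) 0 2 :=
  (hasDerivAt_piece₂ (by ring_nf; simpa [add_comm] using ha)).congr_deriv (by ring)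

theorem hasDerivAt_one (ha : 1 + a ≠ 0) : HasDerivAt (S31 a) (-1) 1 :=
  hasDerivAt_of_nhdsLE_nhdsGE (hasDerivAt_piece₁_one ha) hasDerivAt_piece₂_one
    ((eqOn_piece₁ a).eventuallyEq_of_mem (Icc_mem_nhdsLE zero_lt_one))
    ((eqOn_piece₂ a).eventuallyEq_of_mem (Icc_mem_nhdsGE one_lt_two))

theorem contDiffAt_of_nonneg (ha : -1 < a) {x : ℝ} (hx : 0 ≤ x) :
    ContDiffAt ℝ 1 (S31 a) x := by
  have ha' : 1 + a ≠ 0 := by linarith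
  rcases hx.eq_or_lt with rfl | hx0
  · have hleft : EqOn (S31 a) (fun t => piece₁ a (-t)) (Icc (-1) 0) := fun t ht => by
      rw [← apply_neg, eqOn_piece₁ a ⟨by linarith [ht.2], by linarith [ht.1]⟩]
    refine contDiffAt_one_of_nhdsLE_nhdsGE ?_ (contDiffAt_piece₁ (by simp))
      (hleft.eventuallyEq_of_mem (Icc_mem_nhdsLE neg_one_lt_zero))
      ((eqOn_piece₁ a).eventuallyEq_of_mem (Icc_mem_nhdsGE zero_lt_one)) ?_
    · exact (contDiffAt_piece₁ (t := -0) (by simp)).comp 0 contDiffAt_id.neg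
    · rw [deriv_comp_neg, neg_zero, hasDerivAt_piece₁_zero.deriv, neg_zero]
  rcases lt_trichotomy x 1 with h1 | rfl | h1
  · have hden : 0 < 1 + a * x := one_add_mul_pos_of_mem_Icc ha hx0.le h1.le
    exact (contDiffAt_piece₁ hden.ne').congr_of_eventuallyEq
      ((eqOn_piece₁ a).eventuallyEq_of_mem (Icc_mem_nhds hx0 h1))
  · exact contDiffAt_one_of_nhdsLE_nhdsGE (contDiffAt_piece₁ (by simpa using ha'))
      (contDiffAt_piece₂ (by simp))
      ((eqOn_piece₁ a).eventuallyEq_of_mem (Icc_mem_nhdsLE zero_lt_one))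
      ((eqOn_piece₂ a).eventuallyEq_of_mem (Icc_mem_nhdsGE one_lt_two))
      ((hasDerivAt_piece₁_one ha').deriv.trans hasDerivAt_piece₂_one.deriv.symm)
  rcases lt_trichotomy x 2 with h2 | rfl | h2
  · have hden : 0 < 1 - a + a * x := by
      linarith [one_add_mul_pos_of_mem_Icc ha (sub_nonneg.2 h1.le) (by linarith : x - 1 ≤ 1)]
    exact (contDiffAt_piece₂ hden.ne').congr_of_eventuallyEq
      ((eqOn_piece₂ a).eventuallyEq_of_mem (Icc_mem_nhds h1 h2))
  · exact contDiffAt_one_of_nhdsLE_nhdsGE (contDiffAt_piece₂ (by linarith))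
      contDiffAt_const
      ((eqOn_piece₂ a).eventuallyEq_of_mem (Icc_mem_nhdsLE one_lt_two))
      ((eqOn_zero a).eventuallyEq_of_mem self_mem_nhdsWithin)
      ((hasDerivAt_piece₂_two ha').deriv.trans (deriv_const 2 0).symm)
  · exact contDiffAt_const.congr_of_eventuallyEq
      ((eqOn_zero a).eventuallyEq_of_mem (Ici_mem_nhds h2))

theorem contDiff (ha : -1 < a) : ContDiff ℝ 1 (S31 a) := by
  refine contDiff_iff_contDiffAt.2 fun x => ?_
  rcases le_or_gt 0 x with hx | hx
  · exact contDiffAt_of_nonneg ha hx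
  · have := (contDiffAt_of_nonneg ha (neg_nonneg.2 hx.le)).comp x contDiffAt_id.neg
    rwa [show S31 a ∘ Neg.neg = S31 a from funext fun t => apply_neg a t] at this

end S31

theorem S31_C1 (a : ℝ) (ha : -1 < a) :
    ContDiff ℝ 1 (S31 a) ∧
    (∀ c ∈ ({0, 1, 2} : Set ℝ),
      derivWithin (S31 a) (Set.Iic c) c = derivWithin (S31 a) (Set.Ici c) c) ∧
    deriv (S31 a) 1 = -1 := by
  have hC1 := S31.contDiff ha
  refine ⟨hC1, fun c _ => ?_, (S31.hasDerivAt_one (by linarith)).deriv⟩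
  have hc := hC1.differentiable one_ne_zero c
  rw [hc.derivWithin (uniqueDiffOn_Iic c c self_mem_Iic),
    hc.derivWithin (uniqueDiffOn_Ici c c self_mem_Ici)]
end

section
/- As a → +∞, the rational cubic/linear kernel S_{3/1}(t) with parameter a converges pointwise to the linear (triangular) interpolation kernel S_1(t), where S_1(t) = 1 - |t| for |t| < 1 and S_1(t) = 0 for |t| ≥ 1. -/
noncomputable def S1 (t : ℝ) : ℝ := if |t| < 1 then 1 - |t| else 0

/-!
On each of the three pieces, `S31 a t` has the form `p(t) + c * k / (1 + a * c)` with
`c = |t|` resp. `c = |t| - 1` nonnegative and independent of `a`; the fraction tends to `0`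
as `a → ∞`, leaving the linear kernel. Because the numerator carries the factor `c`, the
degenerate points `t = 0` and `|t| = 1`, where `c = 0`, need no separate treatment.
-/

open Filter Topology

theorem tendsto_mul_div_one_add_mul_atTop {c : ℝ} (hc : 0 ≤ c) (k : ℝ) :
    Tendsto (fun a : ℝ => c * k / (1 + a * c)) atTop (𝓝 0) := by
  rcases hc.eq_or_lt with rfl | hc
  · simp
  · exact tendsto_const_nhds.div_atTop
      (tendsto_atTop_add_const_left _ 1 (tendsto_id.atTop_mul_const hc))

theorem S31_eq_of_abs_lt_one {a t : ℝ} (ha : 0 ≤ a) (ht : |t| < 1) :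
    S31 a t = (1 - |t|) * (1 + |t| * (1 - |t|) / (1 + a * |t|)) := by
  have hden : 1 + a * |t| ≠ 0 := by positivity
  rw [S31, if_pos ht, ← sq_abs t]
  field_simp
  ring

theorem S31_eq_of_one_le_abs_of_abs_lt_two {a t : ℝ} (ht₁ : 1 ≤ |t|) (ht₂ : |t| < 2) :
    S31 a t = (|t| - 1) * -(2 - |t|) ^ 2 / (1 + a * (|t| - 1)) := by
  rw [S31, if_neg ht₁.not_gt, if_pos ht₂]
  ring_nf

theorem S31_eq_zero_of_two_le_abs {a t : ℝ} (ht : 2 ≤ |t|) : S31 a t = 0 := by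
  rw [S31, if_neg (by linarith), if_neg ht.not_gt]

theorem S31_tendsto_linear (t : ℝ) :
    Filter.Tendsto (fun a : ℝ => S31 a t) Filter.atTop (nhds (S1 t)) := by
  rcases lt_or_ge |t| 1 with ht₁ | ht₁
  · have hlim :=
      ((tendsto_mul_div_one_add_mul_atTop (abs_nonneg t) (1 - |t|)).const_add 1).const_mul (1 - |t|)
    rw [add_zero, mul_one] at hlim
    rw [S1, if_pos ht₁]
    refine hlim.congr' ?_
    filter_upwards [eventually_ge_atTop 0] with a ha using (S31_eq_of_abs_lt_one ha ht₁).symm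
  · rw [S1, if_neg ht₁.not_gt]
    rcases lt_or_ge |t| 2 with ht₂ | ht₂
    · exact (tendsto_mul_div_one_add_mul_atTop (sub_nonneg.2 ht₁) _).congr fun a =>
        (S31_eq_of_one_le_abs_of_abs_lt_two ht₁ ht₂).symm
    · simpa only [S31_eq_zero_of_two_le_abs ht₂] using tendsto_const_nhds
end
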